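/- Let J(u,v) for u ∈ ℝ, v ∈ ℝ with 0 < v < 2π be defined by J(u,v) = (2^k·u^{2(n−k)}/v^{k+2})·((v − sin v)/(2v³))^{n−k−1}·sin(v/2)^{k−1}·(sin(v/2) − (v/2)·cos(v/2)), for integers n > k ≥ 2. Then for all t ∈ (0,1] and all 0 < v < 2π, u > 0: J(t·u, t·v) ≥ t^{2(n−k)}·J(u,v). -/

import Mathlib

/-! Scaling `(u, v)` by `t`, the factor `u ^ (2 (n - k))` produces `t ^ (2 (n - k))` and the
prefactor `v ^ -(k + 2)` produces `t ^ -(k + 2)`, which the remaining factors pay back: the middle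
factor does not decrease because `x ↦ (x - sin x) / x³` is antitone on `(0, 2π)`, while
`sin (t x) ≥ t sin x` and `sin (t x) - t x cos (t x) ≥ t³ (sin x - x cos x)` on `(0, π)` give
`t ^ (k - 1) * t³ = t ^ (k + 2)`. All three monotonicity statements are instances of
`N x / x ^ m` being antitone once `x N' x ≤ m N x`; these differential inequalities reduce, by
differentiating once or twice more, to the signs of `sin` and `cos`. -/

open Real Set

lemma nonpos_of_hasDerivAt_nonpos {g g' : ℝ → ℝ} {b x : ℝ} (hg : ∀ y, HasDerivAt g (g' y) y)
    (hg' : ∀ y ∈ Ioo 0 b, g' y ≤ 0) (hg0 : g 0 = 0) (hx0 : 0 ≤ x) (hxb : x ≤ b) : g x ≤ 0 := by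
  have hanti : AntitoneOn g (Icc 0 b) :=
    antitoneOn_of_hasDerivWithinAt_nonpos (convex_Icc 0 b)
      (continuous_iff_continuousAt.2 fun y => (hg y).continuousAt).continuousOn
      (fun y _ => (hg y).hasDerivWithinAt) (by rwa [interior_Icc])
  simpa [hg0] using hanti ⟨le_rfl, hx0.trans hxb⟩ ⟨hx0, hxb⟩ hx0

lemma antitoneOn_div_pow_of_hasDerivAt {N N' : ℝ → ℝ} {b : ℝ} {m : ℕ}
    (hN : ∀ x, HasDerivAt N (N' x) x) (h : ∀ x ∈ Ioo 0 b, x * N' x ≤ m * N x) :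
    AntitoneOn (fun x => N x / x ^ m) (Ioo 0 b) := by
  have hd : ∀ x ∈ Ioo (0 : ℝ) b, HasDerivAt (fun x => N x / x ^ m)
      ((N' x * x ^ m - N x * (m * x ^ (m - 1))) / (x ^ m) ^ 2) x :=
    fun x hx => (hN x).div (hasDerivAt_pow m x) (pow_ne_zero _ hx.1.ne')
  refine antitoneOn_of_hasDerivWithinAt_nonpos (convex_Ioo 0 b)
    (fun x hx => (hd x hx).continuousAt.continuousWithinAt)
    (by rw [interior_Ioo]; exact fun x hx => (hd x hx).hasDerivWithinAt) ?_
  rw [interior_Ioo]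
  intro x hx
  refine div_nonpos_of_nonpos_of_nonneg ?_ (sq_nonneg _)
  -- multiplying by `x` sidesteps the truncated exponent `m - 1` at `m = 0`
  have hscaled : x * (N' x * x ^ m - N x * (m * x ^ (m - 1))) = x ^ m * (x * N' x - m * N x) := by
    rcases m with _ | m
    · simp
    · simp only [Nat.add_sub_cancel, pow_succ]
      push_cast
      ring
  have hneg : x ^ m * (x * N' x - m * N x) ≤ 0 :=
    mul_nonpos_of_nonneg_of_nonpos (pow_nonneg hx.1.le m) (by linarith [h x hx])
  exact nonpos_of_mul_nonpos_right (hscaled ▸ hneg) hx.1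

lemma pow_mul_le_apply_mul_of_antitoneOn {N : ℝ → ℝ} {b : ℝ} {m : ℕ}
    (hN : AntitoneOn (fun x => N x / x ^ m) (Ioo 0 b)) {t x : ℝ} (ht0 : 0 < t) (ht1 : t ≤ 1)
    (hx0 : 0 < x) (hxb : x < b) : t ^ m * N x ≤ N (t * x) := by
  have htx : t * x ≤ x := mul_le_of_le_one_left hx0.le ht1
  have h := hN ⟨by positivity, htx.trans_lt hxb⟩ ⟨hx0, hxb⟩ htx
  dsimp only at h
  rw [mul_pow, div_le_div_iff₀ (by positivity) (by positivity)] at h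
  exact le_of_mul_le_mul_right (by linear_combination h) (pow_pos hx0 m)

lemma mul_cos_le_sin {x : ℝ} (hx0 : 0 ≤ x) (hxπ : x ≤ π) : x * cos x ≤ sin x := by
  have hg : ∀ y, HasDerivAt (fun y => y * cos y - sin y) (-(y * sin y)) y := fun y =>
    ((hasDerivAt_id' y).mul (hasDerivAt_cos y)).sub (hasDerivAt_sin y) |>.congr_deriv (by ring)
  have := nonpos_of_hasDerivAt_nonpos hg
    (fun y hy => neg_nonpos.2 (mul_nonneg hy.1.le (sin_nonneg_of_nonneg_of_le_pi hy.1.le hy.2.le)))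
    (by simp) hx0 hxπ
  linarith

lemma two_mul_cos_add_mul_sin_le_two {x : ℝ} (hx0 : 0 ≤ x) (hx2π : x ≤ 2 * π) :
    2 * cos x + x * sin x ≤ 2 := by
  rcases le_total x π with hxπ | hπx
  · have hg : ∀ y, HasDerivAt (fun y => 2 * cos y + y * sin y - 2) (y * cos y - sin y) y :=
      fun y => (((hasDerivAt_cos y).const_mul 2).add
        ((hasDerivAt_id' y).mul (hasDerivAt_sin y))).sub_const 2 |>.congr_deriv (by ring)
    have := nonpos_of_hasDerivAt_nonpos hg
      (fun y hy => sub_nonpos.2 (mul_cos_le_sin hy.1.le hy.2.le)) (by simp) hx0 hxπ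
    linarith
  · have hsin : sin x ≤ 0 := by
      rw [← sin_sub_two_pi]
      exact sin_nonpos_of_nonpos_of_neg_pi_le (by linarith) (by linarith)
    nlinarith [cos_le_one x]

lemma mul_one_sub_cos_le_three_mul_sub_sin {x : ℝ} (hx0 : 0 ≤ x) (hx2π : x ≤ 2 * π) :
    x * (1 - cos x) ≤ 3 * (x - sin x) := by
  have hg : ∀ y, HasDerivAt (fun y => y * (1 - cos y) - 3 * (y - sin y))
      (2 * cos y + y * sin y - 2) y := fun y =>
    ((hasDerivAt_id' y).mul ((hasDerivAt_cos y).const_sub 1)).sub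
      (((hasDerivAt_id' y).sub (hasDerivAt_sin y)).const_mul 3) |>.congr_deriv (by ring)
  have := nonpos_of_hasDerivAt_nonpos hg
    (fun y hy => sub_nonpos.2 (two_mul_cos_add_mul_sin_le_two hy.1.le hy.2.le)) (by simp) hx0 hx2π
  linarith

lemma mul_mul_sin_le_three_mul_sin_sub_mul_cos {x : ℝ} (hx0 : 0 ≤ x) (hxπ : x ≤ π) :
    x * (x * sin x) ≤ 3 * (sin x - x * cos x) := by
  have hg : ∀ y, HasDerivAt (fun y => y * (y * sin y) - 3 * (sin y - y * cos y))
      (-(y * (sin y - y * cos y))) y := fun y =>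
    ((hasDerivAt_id' y).mul ((hasDerivAt_id' y).mul (hasDerivAt_sin y))).sub
      (((hasDerivAt_sin y).sub ((hasDerivAt_id' y).mul (hasDerivAt_cos y))).const_mul 3)
      |>.congr_deriv (by simp only [Pi.mul_apply]; ring)
  have := nonpos_of_hasDerivAt_nonpos hg
    (fun y hy => neg_nonpos.2 (mul_nonneg hy.1.le (sub_nonneg.2 (mul_cos_le_sin hy.1.le hy.2.le))))
    (by simp) hx0 hxπ
  linarith

lemma mul_sin_le_sin_mul {t x : ℝ} (ht0 : 0 < t) (ht1 : t ≤ 1) (hx0 : 0 < x) (hxπ : x < π) :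
    t * sin x ≤ sin (t * x) := by
  have hanti : AntitoneOn (fun x => sin x / x ^ 1) (Ioo 0 π) :=
    antitoneOn_div_pow_of_hasDerivAt hasDerivAt_sin fun x hx => by
      simpa using mul_cos_le_sin hx.1.le hx.2.le
  simpa using pow_mul_le_apply_mul_of_antitoneOn hanti ht0 ht1 hx0 hxπ

lemma sub_sin_div_pow_three_le {t x : ℝ} (ht0 : 0 < t) (ht1 : t ≤ 1) (hx0 : 0 < x)
    (hx2π : x < 2 * π) : (x - sin x) / x ^ 3 ≤ (t * x - sin (t * x)) / (t * x) ^ 3 := by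
  have hanti : AntitoneOn (fun x => (x - sin x) / x ^ 3) (Ioo 0 (2 * π)) :=
    antitoneOn_div_pow_of_hasDerivAt (fun x => (hasDerivAt_id' x).sub (hasDerivAt_sin x))
      fun x hx => by exact_mod_cast mul_one_sub_cos_le_three_mul_sub_sin hx.1.le hx.2.le
  have htx : t * x ≤ x := mul_le_of_le_one_left hx0.le ht1
  exact hanti ⟨by positivity, htx.trans_lt hx2π⟩ ⟨hx0, hx2π⟩ htx

lemma pow_three_mul_sin_sub_mul_cos_le {t x : ℝ} (ht0 : 0 < t) (ht1 : t ≤ 1) (hx0 : 0 < x)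
    (hxπ : x < π) : t ^ 3 * (sin x - x * cos x) ≤ sin (t * x) - t * x * cos (t * x) := by
  have hanti : AntitoneOn (fun x => (sin x - x * cos x) / x ^ 3) (Ioo 0 π) :=
    antitoneOn_div_pow_of_hasDerivAt (N' := fun x => x * sin x)
      (fun x => (hasDerivAt_sin x).sub ((hasDerivAt_id' x).mul (hasDerivAt_cos x))
        |>.congr_deriv (by ring))
      fun x hx => by exact_mod_cast mul_mul_sin_le_three_mul_sin_sub_mul_cos hx.1.le hx.2.le
  exact pow_mul_le_apply_mul_of_antitoneOn hanti ht0 ht1 hx0 hxπ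

theorem stmt_9_general (n k : ℕ) (hk : 2 ≤ k)
    (J : ℝ → ℝ → ℝ)
    (hJ : ∀ u v : ℝ, J u v =
      (2 ^ k * u ^ (2 * (n - k)) / v ^ (k + 2)) *
        ((v - Real.sin v) / (2 * v ^ 3)) ^ (n - k - 1) *
        (Real.sin (v / 2)) ^ (k - 1) *
        (Real.sin (v / 2) - (v / 2) * Real.cos (v / 2))) :
    ∀ t u v : ℝ, 0 < t → t ≤ 1 → 0 < u → 0 < v → v < 2 * Real.pi →
      J (t * u) (t * v) ≥ t ^ (2 * (n - k)) * J u v := by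
  intro t u v ht0 ht1 hu hv hv2π
  have hv2 : 0 < v / 2 := by positivity
  have hv2π' : v / 2 < π := by linarith
  have hA : (v - sin v) / (2 * v ^ 3) ≤ (t * v - sin (t * v)) / (2 * (t * v) ^ 3) := by
    rw [div_mul_eq_div_div_swap, div_mul_eq_div_div_swap]
    gcongr ?_ / 2
    exact sub_sin_div_pow_three_le ht0 ht1 hv hv2π
  have hS : t * sin (v / 2) ≤ sin (t * v / 2) := by
    rw [mul_div_assoc]; exact mul_sin_le_sin_mul ht0 ht1 hv2 hv2π'
  have hP : t ^ 3 * (sin (v / 2) - v / 2 * cos (v / 2)) ≤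
      sin (t * v / 2) - t * v / 2 * cos (t * v / 2) := by
    rw [mul_div_assoc]; exact pow_three_mul_sin_sub_mul_cos_le ht0 ht1 hv2 hv2π'
  have hA0 : 0 ≤ (v - sin v) / (2 * v ^ 3) :=
    div_nonneg (sub_nonneg.2 (sin_le hv.le)) (by positivity)
  have hS0 : 0 ≤ sin (v / 2) := sin_nonneg_of_nonneg_of_le_pi hv2.le hv2π'.le
  have hP0 : 0 ≤ sin (v / 2) - v / 2 * cos (v / 2) :=
    sub_nonneg.2 (mul_cos_le_sin hv2.le hv2π'.le)
  have hAt0 : 0 ≤ (t * v - sin (t * v)) / (2 * (t * v) ^ 3) := hA0.trans hA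
  have hSt0 : 0 ≤ sin (t * v / 2) := (mul_nonneg ht0.le hS0).trans hS
  obtain ⟨j, rfl⟩ : ∃ j, k = j + 1 := ⟨k - 1, by omega⟩
  rw [hJ, hJ, ge_iff_le, Nat.add_sub_cancel]
  calc _ = 2 ^ (j + 1) * (t * u) ^ (2 * (n - (j + 1))) / (t * v) ^ (j + 1 + 2) *
          ((v - sin v) / (2 * v ^ 3)) ^ (n - (j + 1) - 1) * (t * sin (v / 2)) ^ j *
          (t ^ 3 * (sin (v / 2) - v / 2 * cos (v / 2))) := by
        field_simp
        ring
    _ ≤ _ := by gcongr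

theorem stmt_9 (n k : ℕ) (hk : 2 ≤ k) (hkn : k < n)
    (J : ℝ → ℝ → ℝ)
    (hJ : ∀ u v : ℝ, J u v =
      (2 ^ k * u ^ (2 * (n - k)) / v ^ (k + 2)) *
        ((v - Real.sin v) / (2 * v ^ 3)) ^ (n - k - 1) *
        (Real.sin (v / 2)) ^ (k - 1) *
        (Real.sin (v / 2) - (v / 2) * Real.cos (v / 2))) :
    ∀ t u v : ℝ, 0 < t → t ≤ 1 → 0 < u → 0 < v → v < 2 * Real.pi →
      J (t * u) (t * v) ≥ t ^ (2 * (n - k)) * J u v :=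
  stmt_9_general n k hk J hJ
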